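/- arXiv:2011.06377 — 8 statements merged into one kernel-verified Lean document; each statement's English description precedes it below -/
import Mathlib

section
/- The set of restrictions to F' of polynomials with integer coefficients is dense in the space of continuous real-valued functions on F' with the supremum norm. -/
/-!
For `|t|, |1 - t| ≤ r < 1`, rounding down the coefficients of
`c = ∑ₖ c (n choose k) tᵏ (1 - t)ⁿ⁻ᵏ` gives an integer polynomial within `(n + 1) rⁿ` of the
constant `c`, so every real constant is a uniform limit of integer polynomials on a compact subset
of `(0, 1)`. The uniform closure of the integer polynomials is a ring, hence it contains every real
polynomial, and these are dense by Weierstrass.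
-/

open Polynomial Set

lemma exists_natCast_add_one_mul_pow_le {r ε : ℝ} (hr0 : 0 ≤ r) (hr1 : r < 1) (hε : 0 < ε) :
    ∃ n : ℕ, ((n : ℝ) + 1) * r ^ n ≤ ε := by
  have h : Filter.Tendsto (fun n : ℕ => ((n : ℝ) + 1) * r ^ n) Filter.atTop (nhds 0) := by
    simpa [add_mul] using (tendsto_self_mul_const_pow_of_lt_one hr0 hr1).add
      (tendsto_pow_atTop_nhds_zero_of_lt_one hr0 hr1)
  exact (h.eventually_le_const hε).exists

lemma abs_pow_mul_one_sub_pow_le {r t : ℝ} (ht : |t| ≤ r) (ht' : |1 - t| ≤ r) {k n : ℕ}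
    (hk : k ≤ n) : |t ^ k * (1 - t) ^ (n - k)| ≤ r ^ n := by
  have hr : 0 ≤ r := (abs_nonneg t).trans ht
  calc |t ^ k * (1 - t) ^ (n - k)| = |t| ^ k * |1 - t| ^ (n - k) := by
        rw [abs_mul, abs_pow, abs_pow]
    _ ≤ r ^ k * r ^ (n - k) := by gcongr
    _ = r ^ n := by rw [← pow_add, Nat.add_sub_cancel' hk]

theorem exists_intPolynomial_abs_sub_aeval_le (c : ℝ) {r ε : ℝ} (hr0 : 0 ≤ r) (hr1 : r < 1)
    (hε : 0 < ε) : ∃ p : ℤ[X], ∀ t : ℝ, |t| ≤ r → |1 - t| ≤ r → |c - aeval t p| ≤ ε := by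
  obtain ⟨n, hn⟩ := exists_natCast_add_one_mul_pow_le hr0 hr1 hε
  refine ⟨∑ k ∈ Finset.range (n + 1), C ⌊c * n.choose k⌋ * X ^ k * (1 - X) ^ (n - k),
    fun t ht ht' => ?_⟩
  have hc : c = ∑ k ∈ Finset.range (n + 1), c * n.choose k * (t ^ k * (1 - t) ^ (n - k)) :=
    calc c = c * ∑ k ∈ Finset.range (n + 1), (bernsteinPolynomial ℝ n k).eval t := by
          rw [← eval_finsetSum, bernsteinPolynomial.sum, eval_one, mul_one]
      _ = _ := by simp [bernsteinPolynomial, Finset.mul_sum, mul_assoc]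
  have hdiff : c - aeval t (∑ k ∈ Finset.range (n + 1),
      C ⌊c * n.choose k⌋ * X ^ k * (1 - X) ^ (n - k)) =
      ∑ k ∈ Finset.range (n + 1), Int.fract (c * n.choose k) * (t ^ k * (1 - t) ^ (n - k)) := by
    rw [map_sum]
    nth_rw 1 [hc]
    rw [← Finset.sum_sub_distrib]
    refine Finset.sum_congr rfl fun k _ => ?_
    simp only [map_mul, map_pow, map_sub, map_one, aeval_X, map_intCast, eq_intCast,
      ← Int.self_sub_floor]
    ring
  rw [hdiff]
  calc _ ≤ ∑ k ∈ Finset.range (n + 1),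
        |Int.fract (c * n.choose k) * (t ^ k * (1 - t) ^ (n - k))| :=
        Finset.abs_sum_le_sum_abs _ _
    _ ≤ ∑ k ∈ Finset.range (n + 1), r ^ n := by
        refine Finset.sum_le_sum fun k hk => ?_
        rw [abs_mul, abs_of_nonneg (Int.fract_nonneg _)]
        exact (mul_le_of_le_one_left (abs_nonneg _) (Int.fract_lt_one _).le).trans
          (abs_pow_mul_one_sub_pow_le ht ht' (Nat.lt_succ_iff.mp (Finset.mem_range.mp hk)))
    _ = ((n : ℝ) + 1) * r ^ n := by simp
    _ ≤ ε := hn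

lemma IsCompact.exists_lt_one_forall_abs_le_of_subset_Ioo {s : Set ℝ} (hs : IsCompact s)
    (hs01 : s ⊆ Ioo 0 1) : ∃ r, 0 ≤ r ∧ r < 1 ∧ ∀ t ∈ s, |t| ≤ r ∧ |1 - t| ≤ r := by
  rcases s.eq_empty_or_nonempty with rfl | hne
  · exact ⟨0, le_rfl, one_pos, by simp⟩
  have hf : Continuous fun t : ℝ => max |t| |1 - t| := by fun_prop
  obtain ⟨t₀, ht₀, hmax⟩ := hs.exists_isMaxOn hne hf.continuousOn
  obtain ⟨h0, h1⟩ := hs01 ht₀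
  refine ⟨max |t₀| |1 - t₀|, by positivity, ?_, fun t ht => max_le_iff.mp (hmax ht)⟩
  rw [max_lt_iff, abs_lt, abs_lt]
  constructor <;> constructor <;> linarith

theorem ContinuousMap.aeval_apply {R A X : Type*} [CommSemiring R] [CommSemiring A]
    [Algebra R A] [TopologicalSpace A] [IsTopologicalSemiring A] [TopologicalSpace X]
    (f : C(X, A)) (p : R[X]) (x : X) : aeval f p x = aeval (f x) p := by
  rw [← ContinuousMap.evalAlgHom_apply R, ← aeval_algHom_apply]
  rfl

theorem dense_range_aeval_intPolynomial_of_subset_Ioo {s : Set ℝ} [CompactSpace s]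
    (hs : s ⊆ Ioo 0 1) :
    Dense (range fun p : ℤ[X] => aeval ((ContinuousMap.id ℝ).restrict s) p) := by
  set A := (aeval (R := ℤ) ((ContinuousMap.id ℝ).restrict s)).range.topologicalClosure
  have hA : (A : Set C(s, ℝ)) =
      closure (range fun p : ℤ[X] => aeval ((ContinuousMap.id ℝ).restrict s) p) := by
    simp [A]
  obtain ⟨r, hr0, hr1, hr⟩ :=
    (isCompact_iff_compactSpace.mpr ‹_›).exists_lt_one_forall_abs_le_of_subset_Ioo hs
  have hconst (c : ℝ) : algebraMap ℝ C(s, ℝ) c ∈ A := by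
    rw [← SetLike.mem_coe, hA, Metric.mem_closure_iff]
    intro ε hε
    obtain ⟨p, hp⟩ := exists_intPolynomial_abs_sub_aeval_le c hr0 hr1 (half_pos hε)
    refine ⟨_, ⟨p, rfl⟩, ((ContinuousMap.dist_le (half_pos hε).le).mpr fun t => ?_).trans_lt
      (half_lt_self hε)⟩
    rw [Real.dist_eq, ContinuousMap.aeval_apply]
    exact hp t (hr t t.2).1 (hr t t.2).2
  let B : Subalgebra ℝ C(s, ℝ) := { A.toSubring with algebraMap_mem' := hconst }
  have hpoly : polynomialFunctions s ≤ B := by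
    rw [polynomialFunctions.eq_adjoin_X, Algebra.adjoin_le_iff, singleton_subset_iff]
    refine Subalgebra.le_topologicalClosure _ ⟨X, ?_⟩
    ext
    simp
  have hB := Subalgebra.topologicalClosure_minimal hpoly (Subalgebra.isClosed_topologicalClosure _)
  rw [polynomialFunctions.topologicalClosure] at hB
  rw [dense_iff_closure_eq, ← hA, eq_univ_iff_forall]
  exact fun g => hB Algebra.mem_top

theorem stmt0_general (F' : Set ℝ) (hclosed : IsClosed F')
    (hsub : F' ⊆ Set.Icc 0 1) (h0 : (0:ℝ) ∉ F') (h1 : (1:ℝ) ∉ F') :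
    ∀ g : C(F', ℝ), ∀ ε : ℝ, 0 < ε →
      ∃ p : Polynomial ℤ, ∀ t : F', |g t - Polynomial.aeval (t : ℝ) p| < ε := by
  intro g ε hε
  have : CompactSpace F' :=
    isCompact_iff_compactSpace.mp (isCompact_Icc.of_isClosed_subset hclosed hsub)
  have hF' : F' ⊆ Ioo 0 1 := fun t ht =>
    ⟨(hsub ht).1.lt_of_ne fun h => h0 (h ▸ ht), (hsub ht).2.lt_of_ne fun h => h1 (h ▸ ht)⟩
  obtain ⟨_, ⟨p, rfl⟩, hp⟩ :=
    Metric.mem_closure_iff.mp (dense_range_aeval_intPolynomial_of_subset_Ioo hF' g) ε hε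
  refine ⟨p, fun t => ?_⟩
  have hpt := (ContinuousMap.dist_apply_le_dist t).trans_lt hp
  rwa [ContinuousMap.aeval_apply, Real.dist_eq] at hpt

/-- For a nonempty closed subset `F'` of `[0,1]` containing neither `0` nor `1`,
the restrictions to `F'` of integer-coefficient polynomials are dense in `C_ℝ(F')`
for the supremum norm. -/
theorem stmt0 (F' : Set ℝ) (hne : F'.Nonempty) (hclosed : IsClosed F')
    (hsub : F' ⊆ Set.Icc 0 1) (h0 : (0:ℝ) ∉ F') (h1 : (1:ℝ) ∉ F') :
    ∀ g : C(F', ℝ), ∀ ε : ℝ, 0 < ε →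
      ∃ p : Polynomial ℤ, ∀ t : F', |g t - Polynomial.aeval (t : ℝ) p| < ε :=
  stmt0_general F' hclosed hsub h0 h1
end

section
/- If 1/2 is not in F', then the set of functions on F' of the form t ↦ ((2t-1)/(t(1-t)))·f(t) with f ∈ Z[t] is dense in C_R(F') with the supremum norm. -/
/-!
Rounding each coefficient `f (k/n) · C(n, k)` of the Bernstein polynomial `Bₙ f`, written in
the basis `x^k (1-x)^(n-k)`, down to an integer changes it by at most `(n + 1) (1 - δ)^n` on
`[δ, 1 - δ]`, since every basis function is at most `(1 - δ)^n` there; for `δ > 0` this tends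
to `0`. So integer polynomials are uniformly dense in `C(K, ℝ)` for every compact `K ⊆ (0, 1)`.
The weight `(2t - 1) / (t (1 - t))` is continuous and nowhere
zero on `F'`, so approximating `g` divided by the weight gives the theorem.
-/

open Polynomial Filter Topology Set unitInterval

noncomputable def floorBernstein (n : ℕ) (f : C(I, ℝ)) : ℤ[X] :=
  ∑ k : Fin (n + 1), C ⌊f (bernstein.z k) * n.choose k⌋ * X ^ (k : ℕ) * (1 - X) ^ (n - k)

lemma pow_mul_one_sub_pow_le {δ x : ℝ} (hδ : 0 ≤ δ) (hx : x ∈ Icc δ (1 - δ)) {k n : ℕ}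
    (hk : k ≤ n) : x ^ k * (1 - x) ^ (n - k) ≤ (1 - δ) ^ n := by
  obtain ⟨hδx, hx1⟩ := hx
  calc x ^ k * (1 - x) ^ (n - k) ≤ (1 - δ) ^ k * (1 - δ) ^ (n - k) :=
        mul_le_mul (pow_le_pow_left₀ (by linarith) hx1 k)
          (pow_le_pow_left₀ (by linarith) (by linarith) _) (pow_nonneg (by linarith) _)
          (pow_nonneg (by linarith) _)
    _ = (1 - δ) ^ n := by rw [← pow_add, Nat.add_sub_cancel' hk]

lemma abs_bernsteinApproximation_sub_floorBernstein_le (n : ℕ) (f : C(I, ℝ)) {δ : ℝ}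
    (hδ : 0 ≤ δ) {x : I} (hx : (x : ℝ) ∈ Icc δ (1 - δ)) :
    |bernsteinApproximation n f x - aeval (x : ℝ) (floorBernstein n f)| ≤
      (n + 1) * (1 - δ) ^ n := by
  have hterm (k : Fin (n + 1)) :
      |bernstein n k x • f (bernstein.z k) -
        ⌊f (bernstein.z k) * n.choose k⌋ * (x : ℝ) ^ (k : ℕ) * (1 - (x : ℝ)) ^ (n - k)| ≤
        (1 - δ) ^ n := by
    set c := f (bernstein.z k) * n.choose k
    set P := (x : ℝ) ^ (k : ℕ) * (1 - (x : ℝ)) ^ (n - k)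
    have hP : P ≤ (1 - δ) ^ n := pow_mul_one_sub_pow_le hδ hx (Nat.lt_succ_iff.mp k.2)
    have hsplit : bernstein n k x • f (bernstein.z k) - ⌊c⌋ * (x : ℝ) ^ (k : ℕ) *
        (1 - (x : ℝ)) ^ (n - k) = Int.fract c * P := by
      rw [smul_eq_mul, bernstein_apply, ← Int.self_sub_floor]; ring
    have hP0 : 0 ≤ P := mul_nonneg (pow_nonneg x.2.1 _) (pow_nonneg (sub_nonneg.2 x.2.2) _)
    rw [hsplit, abs_of_nonneg (mul_nonneg (Int.fract_nonneg c) hP0)]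
    exact (mul_le_of_le_one_left hP0 (Int.fract_lt_one c).le).trans hP
  calc _ = |∑ k : Fin (n + 1), (bernstein n k x • f (bernstein.z k) -
        ⌊f (bernstein.z k) * n.choose k⌋ * (x : ℝ) ^ (k : ℕ) * (1 - (x : ℝ)) ^ (n - k))| := by
        simp [floorBernstein, bernsteinApproximation.apply, map_sum]
    _ ≤ ∑ _k : Fin (n + 1), (1 - δ) ^ n :=
        (Finset.abs_sum_le_sum_abs _ _).trans (Finset.sum_le_sum fun k _ ↦ hterm k)
    _ = (n + 1) * (1 - δ) ^ n := by simp

lemma tendsto_succ_mul_pow_of_lt_one {r : ℝ} (hr₀ : 0 ≤ r) (hr₁ : r < 1) :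
    Tendsto (fun n : ℕ ↦ ((n : ℝ) + 1) * r ^ n) atTop (𝓝 0) := by
  simpa [add_mul] using (tendsto_self_mul_const_pow_of_lt_one hr₀ hr₁).add
    (tendsto_pow_atTop_nhds_zero_of_lt_one hr₀ hr₁)

lemma exists_intPoly_approx_on_Icc (f : C(I, ℝ)) {δ : ℝ} (hδ₀ : 0 < δ) (hδ₁ : δ ≤ 1) {ε : ℝ}
    (hε : 0 < ε) : ∃ q : ℤ[X], ∀ x : I, (x : ℝ) ∈ Icc δ (1 - δ) → |f x - aeval (x : ℝ) q| < ε := by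
  have hB := (tendsto_iff_dist_tendsto_zero.mp (bernsteinApproximation_uniform f)).eventually
    (gt_mem_nhds (half_pos hε))
  have hR := (tendsto_succ_mul_pow_of_lt_one (sub_nonneg.2 hδ₁) (sub_lt_self 1 hδ₀)).eventually
    (gt_mem_nhds (half_pos hε))
  obtain ⟨n, hBn, hRn⟩ := (hB.and hR).exists
  refine ⟨floorBernstein n f, fun x hx ↦ ?_⟩
  have hfB : |f x - bernsteinApproximation n f x| < ε / 2 := by
    rw [abs_sub_comm, ← Real.dist_eq]
    exact (ContinuousMap.dist_apply_le_dist x).trans_lt hBn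
  have hBq := abs_bernsteinApproximation_sub_floorBernstein_le n f hδ₀.le hx
  linarith [abs_sub_le (f x) (bernsteinApproximation n f x) (aeval (x : ℝ) (floorBernstein n f))]

lemma IsCompact.exists_subset_Icc_of_subset_Ioo {K : Set ℝ} (hK : IsCompact K)
    (hKI : K ⊆ Ioo 0 1) : ∃ δ, 0 < δ ∧ δ ≤ 1 ∧ K ⊆ Icc δ (1 - δ) := by
  obtain ⟨δ, hδ, hδK⟩ := hK.exists_forall_le' (f := fun t ↦ min t (1 - t)) (a := 0)
    (by fun_prop) fun t ht ↦ lt_min (hKI ht).1 (sub_pos.2 (hKI ht).2)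
  refine ⟨min δ 1, lt_min hδ one_pos, min_le_right _ _, fun t ht ↦ ?_⟩
  have := le_min_iff.mp ((min_le_left δ 1).trans (hδK t ht))
  constructor <;> linarith

theorem exists_intPoly_approx_of_subset_Ioo {K : Set ℝ} (hK : IsCompact K) (hKI : K ⊆ Ioo 0 1)
    (h : C(K, ℝ)) {ε : ℝ} (hε : 0 < ε) : ∃ q : ℤ[X], ∀ t : K, |h t - aeval (t : ℝ) q| < ε := by
  obtain ⟨δ, hδ₀, hδ₁, hKδ⟩ := hK.exists_subset_Icc_of_subset_Ioo hKI
  obtain ⟨H, rfl⟩ := ContinuousMap.exists_restrict_eq hK.isClosed h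
  obtain ⟨q, hq⟩ := exists_intPoly_approx_on_Icc (H.restrict I) hδ₀ hδ₁ hε
  exact ⟨q, fun t ↦ hq ⟨t, Ioo_subset_Icc_self (hKI t.2)⟩ (hKδ t.2)⟩

theorem exists_intPoly_weighted_approx {K : Set ℝ} (hK : IsCompact K) (hKI : K ⊆ Ioo 0 1)
    (φ : C(K, ℝ)) (hφ : ∀ t, φ t ≠ 0) (g : C(K, ℝ)) {ε : ℝ} (hε : 0 < ε) :
    ∃ q : ℤ[X], ∀ t : K, |g t - φ t * aeval (t : ℝ) q| < ε := by
  have : CompactSpace K := isCompact_iff_compactSpace.mp hK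
  let h : C(K, ℝ) := ⟨fun t ↦ g t / φ t, g.continuous.div φ.continuous hφ⟩
  have hM : 0 < ‖φ‖ + 1 := by positivity
  obtain ⟨q, hq⟩ := exists_intPoly_approx_of_subset_Ioo hK hKI h (div_pos hε hM)
  refine ⟨q, fun t ↦ ?_⟩
  have hφt : |φ t| ≤ ‖φ‖ + 1 := by
    rw [← Real.norm_eq_abs]; linarith [φ.norm_coe_le_norm t]
  calc |g t - φ t * aeval (t : ℝ) q| = |φ t| * |h t - aeval (t : ℝ) q| := by
        rw [← abs_mul, mul_sub]; simp [h, mul_div_cancel₀ _ (hφ t)]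
    _ ≤ (‖φ‖ + 1) * |h t - aeval (t : ℝ) q| := by gcongr
    _ < (‖φ‖ + 1) * (ε / (‖φ‖ + 1)) := by gcongr; exact hq t
    _ = ε := mul_div_cancel₀ ε hM.ne'

theorem stmt1_general (F' : Set ℝ) (hclosed : IsClosed F')
    (hsub : F' ⊆ Set.Icc 0 1) (h0 : (0:ℝ) ∉ F') (h1 : (1:ℝ) ∉ F')
    (hhalf : (1/2 : ℝ) ∉ F') :
    ∀ g : C(F', ℝ), ∀ ε : ℝ, 0 < ε →
      ∃ p : Polynomial ℤ, ∀ t : F',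
        |g t - (2 * (t:ℝ) - 1) / ((t:ℝ) * (1 - (t:ℝ))) * Polynomial.aeval (t : ℝ) p| < ε := by
  intro g ε hε
  have hF'I : F' ⊆ Ioo 0 1 := fun t ht ↦
    ⟨(hsub ht).1.lt_of_ne (by rintro rfl; exact h0 ht),
      (hsub ht).2.lt_of_ne (by rintro rfl; exact h1 ht)⟩
  have hden (t : F') : (t : ℝ) * (1 - t) ≠ 0 :=
    mul_ne_zero (hF'I t.2).1.ne' (sub_pos.2 (hF'I t.2).2).ne'
  have hnum (t : F') : 2 * (t : ℝ) - 1 ≠ 0 := fun h ↦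
    hhalf (by convert t.2; linarith)
  let φ : C(F', ℝ) := ⟨fun t ↦ (2 * (t : ℝ) - 1) / ((t : ℝ) * (1 - t)),
    Continuous.div (by fun_prop) (by fun_prop) hden⟩
  exact exists_intPoly_weighted_approx (isCompact_Icc.of_isClosed_subset hclosed hsub) hF'I φ
    (fun t ↦ div_ne_zero (hnum t) (hden t)) g hε

/-- If `1/2 ∉ F'`, the functions `t ↦ ((2t-1)/(t(1-t)))·f(t)`, `f ∈ ℤ[t]`,
are dense in `C_ℝ(F')` for the supremum norm. -/
theorem stmt1 (F' : Set ℝ) (hne : F'.Nonempty) (hclosed : IsClosed F')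
    (hsub : F' ⊆ Set.Icc 0 1) (h0 : (0:ℝ) ∉ F') (h1 : (1:ℝ) ∉ F')
    (hhalf : (1/2 : ℝ) ∉ F') :
    ∀ g : C(F', ℝ), ∀ ε : ℝ, 0 < ε →
      ∃ p : Polynomial ℤ, ∀ t : F',
        |g t - (2 * (t:ℝ) - 1) / ((t:ℝ) * (1 - (t:ℝ))) * Polynomial.aeval (t : ℝ) p| < ε :=
  stmt1_general F' hclosed hsub h0 h1 hhalf
end

section
/- If 1/2 ∈ F', then the set of functions on F' of the form t ↦ ((2t-1)/(t(1-t)))·f(t) with f ∈ Z[t] is dense in the closed subspace {g ∈ C_R(F') : g(1/2) = 0} with the supremum norm. -/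
/-!
On a compact set `K ⊆ (0, 1)` the integer polynomials in `t` are uniformly dense in `C(K, ℝ)`:
since `|1 - 2t| < 1` on `K`, the integer polynomials `t (1 + y + ⋯ + y^(k-1))` with `y = 1 - 2t`
converge to the constant `1/2`, so the closure of `ℤ[t]` is a closed ring containing all dyadic,
hence all real constants, and the Stone–Weierstrass theorem applies.

By the correspondence between closed ideals of `C(K, ℝ)` and closed subsets of `K`, a function
vanishing at `1/2` lies in the closure of the ideal generated by `2t - 1 = φ · t(1 - t)`, where
`φ(t) = (2t - 1)/(t(1 - t))` is continuous on `K`. So it is a limit of functions `φ · u` with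
`u ∈ C(K, ℝ)`, hence of functions `φ · p` with `p ∈ ℤ[t]`.
-/

open Polynomial Filter Topology Set

lemma Polynomial.aeval_continuousMap_apply_eq_aeval {X R A : Type*} [TopologicalSpace X]
    [CommSemiring R] [CommSemiring A] [Algebra R A] [TopologicalSpace A]
    [IsTopologicalSemiring A] (p : R[X]) (f : C(X, A)) (t : X) :
    aeval f p t = aeval (f t) p :=
  (aeval_algHom_apply (ContinuousMap.evalAlgHom R A t) f p).symm

lemma Subring.eq_top_of_isClosed_of_inv_two_mem (S : Subring ℝ) (hS : IsClosed (S : Set ℝ))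
    (h : (2⁻¹ : ℝ) ∈ S) : S = ⊤ := by
  have hdense : Dense (S : Set ℝ) := S.toAddSubgroup.dense_of_not_isolated_zero fun ε hε => by
    obtain ⟨n, hn⟩ := exists_pow_lt_of_lt_one hε (by norm_num : (2⁻¹ : ℝ) < 1)
    exact ⟨2⁻¹ ^ n, pow_mem h n, by positivity, hn⟩
  exact SetLike.coe_injective (hS.closure_eq.symm.trans hdense.closure_eq)

namespace ContinuousMap

variable {K : Type*} [TopologicalSpace K]

lemma algebraMap_mem_of_isClosed_of_inv_two_mem (T : Subring C(K, ℝ))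
    (hT : IsClosed (T : Set C(K, ℝ))) (h : algebraMap ℝ C(K, ℝ) 2⁻¹ ∈ T) (c : ℝ) :
    algebraMap ℝ C(K, ℝ) c ∈ T := by
  have hcomap := (T.comap (algebraMap ℝ C(K, ℝ))).eq_top_of_isClosed_of_inv_two_mem
    (hT.preimage (continuous_algebraMap ℝ C(K, ℝ))) h
  change c ∈ T.comap _
  simp [hcomap]

lemma subring_dense_of_separatesPoints [CompactSpace K] (S : Subring C(K, ℝ))
    (hsep : ∀ ⦃s t : K⦄, s ≠ t → ∃ f ∈ S, f s ≠ f t)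
    (h : algebraMap ℝ C(K, ℝ) 2⁻¹ ∈ closure (S : Set C(K, ℝ))) :
    Dense (S : Set C(K, ℝ)) := by
  let A : Subalgebra ℝ C(K, ℝ) :=
    { S.topologicalClosure with
      algebraMap_mem' := algebraMap_mem_of_isClosed_of_inv_two_mem _
        S.isClosed_topologicalClosure h }
  have hA : A.SeparatesPoints := fun s t hst => by
    obtain ⟨f, hfS, hf⟩ := hsep hst
    exact ⟨f, ⟨f, S.le_topologicalClosure hfS, rfl⟩, hf⟩
  have htop : (A.topologicalClosure : Set C(K, ℝ)) = univ := by
    rw [subalgebra_topologicalClosure_eq_top_of_separatesPoints A hA, Algebra.coe_top]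
  rwa [dense_iff_closure_eq, ← closure_closure]

lemma inv_two_mem_closure_range_aeval_int [CompactSpace K] (x : C(K, ℝ))
    (hx : ∀ t, x t ∈ Ioo 0 1) :
    algebraMap ℝ C(K, ℝ) 2⁻¹ ∈ closure (range fun p : ℤ[X] => aeval x p) := by
  set y : C(K, ℝ) := 1 - 2 * x
  have hy : ‖y‖ < 1 := (norm_lt_iff _ one_pos).mpr fun t => by
    obtain ⟨h0, h1⟩ := hx t
    change |1 - 2 * x t| < 1
    rw [abs_lt]
    constructor <;> linarith
  have happrox (k : ℕ) : aeval x (X * ∑ i ∈ Finset.range k, (1 - 2 * X) ^ i : ℤ[X])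
      = algebraMap ℝ C(K, ℝ) 2⁻¹ * (1 - y ^ k) := by
    have h2 : algebraMap ℝ C(K, ℝ) 2⁻¹ * 2 = 1 := by
      rw [← map_ofNat (algebraMap ℝ C(K, ℝ)) 2, ← map_mul, inv_mul_cancel₀ two_ne_zero, map_one]
    rw [← mul_neg_geom_sum, sub_sub_cancel, ← mul_assoc, ← mul_assoc, h2, one_mul]
    simp [y, map_ofNat]
  have hlim : Tendsto (fun k => algebraMap ℝ C(K, ℝ) 2⁻¹ * (1 - y ^ k)) atTop
      (𝓝 (algebraMap ℝ C(K, ℝ) 2⁻¹ * (1 - 0))) :=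
    (tendsto_const_nhds.sub (tendsto_pow_atTop_nhds_zero_of_norm_lt_one hy)).const_mul _
  rw [sub_zero, mul_one] at hlim
  exact mem_closure_of_tendsto hlim (Eventually.of_forall fun k => ⟨_, happrox k⟩)

lemma denseRange_aeval_int [CompactSpace K] (x : C(K, ℝ)) (hinj : Function.Injective x)
    (hx : ∀ t, x t ∈ Ioo 0 1) : DenseRange fun p : ℤ[X] => aeval x p :=
  subring_dense_of_separatesPoints (aeval x : ℤ[X] →ₐ[ℤ] C(K, ℝ)).range.toSubring
    (fun _ _ hst => ⟨x, ⟨X, aeval_X x⟩, hinj.ne hst⟩) (inv_two_mem_closure_range_aeval_int x hx)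

lemma mem_closure_range_mul_of_dvd [CompactSpace K] [T2Space K] {ι : Type*}
    {f g φ : C(K, ℝ)} {v : ι → C(K, ℝ)} (hdvd : φ ∣ f) (hv : DenseRange v)
    (hg : ∀ t, f t = 0 → g t = 0) : g ∈ closure (range fun i => φ * v i) := by
  have hgI : g ∈ (Ideal.span {f}).closure := by
    rw [← idealOfSet_ofIdeal_eq_closure, mem_idealOfSet]
    exact fun t ht => hg t (notMem_setOfIdeal.mp ht (Ideal.mem_span_singleton_self f))
  have hspan : ((Ideal.span {f} : Ideal C(K, ℝ)) : Set C(K, ℝ)) ⊆ range (φ * ·) := by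
    intro h hh
    obtain ⟨c, rfl⟩ := Ideal.mem_span_singleton'.mp hh
    obtain ⟨u, rfl⟩ := hdvd
    exact ⟨u * c, by ring⟩
  have hrange : range (φ * ·) ⊆ closure (range fun i => φ * v i) := by
    simpa only [← range_comp, Function.comp_def] using
      (continuous_const_mul φ).range_subset_closure_image_dense hv
  rw [← SetLike.mem_coe, Ideal.coe_closure] at hgI
  exact closure_minimal (hspan.trans hrange) isClosed_closure hgI

end ContinuousMap

theorem stmt2_general (F' : Set ℝ) (hclosed : IsClosed F')
    (hsub : F' ⊆ Set.Icc 0 1) (h0 : (0:ℝ) ∉ F') (h1 : (1:ℝ) ∉ F') :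
    ∀ g : C(F', ℝ), (∀ t : F', (t : ℝ) = 1/2 → g t = 0) → ∀ ε : ℝ, 0 < ε →
      ∃ p : Polynomial ℤ, ∀ t : F',
        |g t - (2 * (t:ℝ) - 1) / ((t:ℝ) * (1 - (t:ℝ))) * Polynomial.aeval (t : ℝ) p| < ε := by
  intro g hg ε hε
  have : CompactSpace F' :=
    isCompact_iff_compactSpace.mp (isCompact_Icc.of_isClosed_subset hclosed hsub)
  have hIoo (t : F') : (t : ℝ) ∈ Ioo 0 1 :=
    ⟨(hsub t.2).1.lt_of_ne' (ne_of_mem_of_not_mem t.2 h0),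
      (hsub t.2).2.lt_of_ne (ne_of_mem_of_not_mem t.2 h1)⟩
  have hden (t : F') : (t : ℝ) * (1 - t) ≠ 0 := (mul_pos (hIoo t).1 (sub_pos.2 (hIoo t).2)).ne'
  let x : C(F', ℝ) := ⟨(↑), continuous_subtype_val⟩
  let φ : C(F', ℝ) :=
    ⟨fun t => (2 * (t:ℝ) - 1) / ((t:ℝ) * (1 - (t:ℝ))), by fun_prop (disch := exact hden)⟩
  have hdvd : φ ∣ 2 * x - 1 :=
    ⟨x * (1 - x), ContinuousMap.ext fun t => (div_mul_cancel₀ (2 * (t : ℝ) - 1) (hden t)).symm⟩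
  have hg' : g ∈ closure (range fun p : ℤ[X] => φ * aeval x p) :=
    ContinuousMap.mem_closure_range_mul_of_dvd hdvd (ContinuousMap.denseRange_aeval_int x Subtype.val_injective hIoo)
      fun t ht => hg t (by change 2 * (t : ℝ) - 1 = 0 at ht; linarith)
  obtain ⟨_, ⟨p, rfl⟩, hp⟩ := Metric.mem_closure_iff.mp hg' ε hε
  refine ⟨p, fun t => ?_⟩
  simpa [x, φ, Polynomial.aeval_continuousMap_apply_eq_aeval, Real.dist_eq] using
    (ContinuousMap.dist_apply_le_dist t).trans_lt hp

/-- If `1/2 ∈ F'`, the functions `t ↦ ((2t-1)/(t(1-t)))·f(t)`, `f ∈ ℤ[t]`,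
are dense in `{g ∈ C_ℝ(F') : g(1/2) = 0}` for the supremum norm. -/
theorem stmt2 (F' : Set ℝ) (hclosed : IsClosed F')
    (hsub : F' ⊆ Set.Icc 0 1) (h0 : (0:ℝ) ∉ F') (h1 : (1:ℝ) ∉ F')
    (hhalf : (1/2 : ℝ) ∈ F') :
    ∀ g : C(F', ℝ), (∀ t : F', (t : ℝ) = 1/2 → g t = 0) → ∀ ε : ℝ, 0 < ε →
      ∃ p : Polynomial ℤ, ∀ t : F',
        |g t - (2 * (t:ℝ) - 1) / ((t:ℝ) * (1 - (t:ℝ))) * Polynomial.aeval (t : ℝ) p| < ε :=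
  stmt2_general F' hclosed hsub h0 h1
end

section
/- The set of functions on F' of the form t ↦ (2t-1)·h(t) with h ∈ C_R(F') is dense in {g ∈ C_R(F') : g(1/2) = 0}, when 1/2 ∈ F'. -/
/-! Divide `g` by `p = 2t - 1` after truncating `p²` from below at `c² > 0`: the function
`h = g p / max (p², c²)` is continuous, `p h = g` where `|p| ≥ c`, and `|g - p h| ≤ |g|` elsewhere.
Choosing `c` so small that `|p t| < c` forces `t` into the neighbourhood of `1/2` on which
`|g| < ε` (continuity of `g` and `g (1/2) = 0`) makes the error everywhere smaller than `ε`. -/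

lemma sub_mul_div_max_sq_eq_zero {a c : ℝ} (b : ℝ) (hc : 0 < c) (hca : c ≤ |a|) :
    b - a * (b * a / max (a ^ 2) (c ^ 2)) = 0 := by
  have ha : a ≠ 0 := abs_pos.mp (hc.trans_le hca)
  rw [max_eq_left (sq_le_sq.mpr (by rwa [abs_of_pos hc]))]
  field_simp
  ring

lemma abs_sub_mul_div_max_sq_le (a b : ℝ) {c : ℝ} (hc : 0 < c) :
    |b - a * (b * a / max (a ^ 2) (c ^ 2))| ≤ |b| := by
  have hm : 0 < max (a ^ 2) (c ^ 2) := lt_max_of_lt_right (by positivity)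
  have hq₀ : 0 ≤ a ^ 2 / max (a ^ 2) (c ^ 2) := by positivity
  have hq₁ : a ^ 2 / max (a ^ 2) (c ^ 2) ≤ 1 := (div_le_one hm).mpr (le_max_left _ _)
  calc |b - a * (b * a / max (a ^ 2) (c ^ 2))|
      = |b| * |1 - a ^ 2 / max (a ^ 2) (c ^ 2)| := by
        rw [← abs_mul]; congr 1; field_simp
    _ ≤ |b| * 1 := by gcongr; rw [abs_le]; constructor <;> linarith
    _ = |b| := mul_one _

lemma ContinuousMap.exists_abs_sub_mul_lt {X : Type*} [TopologicalSpace X] (p g : C(X, ℝ))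
    {c ε : ℝ} (hc : 0 < c) (hε : 0 < ε) (hg : ∀ x, |p x| < c → |g x| < ε) :
    ∃ h : C(X, ℝ), ∀ x, |g x - p x * h x| < ε := by
  refine ⟨⟨fun x ↦ g x * p x / max (p x ^ 2) (c ^ 2), ?_⟩, fun x ↦ ?_⟩
  · exact (g.continuous.mul p.continuous).div (by fun_prop)
      fun x ↦ (lt_max_of_lt_right (by positivity)).ne'
  · rcases lt_or_ge |p x| c with hpx | hpx
    · exact (abs_sub_mul_div_max_sq_le _ _ hc).trans_lt (hg x hpx)
    · simpa [sub_mul_div_max_sq_eq_zero (g x) hc hpx] using hε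

theorem stmt3_general (F' : Set ℝ)
    (hhalf : (1/2 : ℝ) ∈ F') :
    ∀ g : C(F', ℝ), (∀ t : F', (t : ℝ) = 1/2 → g t = 0) → ∀ ε : ℝ, 0 < ε →
      ∃ h : C(F', ℝ), ∀ t : F', |g t - (2 * (t:ℝ) - 1) * h t| < ε := by
  intro g hg ε hε
  let half : F' := ⟨1/2, hhalf⟩
  obtain ⟨δ, hδ, hgδ⟩ := Metric.continuousAt_iff.mp (g.continuous.continuousAt (x := half)) ε hε
  let p : C(F', ℝ) := ⟨fun t ↦ 2 * (t : ℝ) - 1, by fun_prop⟩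
  refine p.exists_abs_sub_mul_lt g (c := 2 * δ) (by positivity) hε fun t ht ↦ ?_
  have hdist : dist t half < δ := by
    simp only [p, ContinuousMap.coe_mk, abs_lt] at ht
    rw [Subtype.dist_eq, Real.dist_eq, show (half : ℝ) = 1 / 2 from rfl, abs_lt]
    constructor <;> linarith
  simpa [hg half rfl] using hgδ hdist

/-- If `1/2 ∈ F'`, the functions `t ↦ (2t-1)·h(t)` with `h ∈ C_ℝ(F')`
are dense in `{g ∈ C_ℝ(F') : g(1/2) = 0}` for the supremum norm. -/
theorem stmt3 (F' : Set ℝ) (hclosed : IsClosed F')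
    (hsub : F' ⊆ Set.Icc 0 1) (h0 : (0:ℝ) ∉ F') (h1 : (1:ℝ) ∉ F')
    (hhalf : (1/2 : ℝ) ∈ F') :
    ∀ g : C(F', ℝ), (∀ t : F', (t : ℝ) = 1/2 → g t = 0) → ∀ ε : ℝ, 0 < ε →
      ∃ h : C(F', ℝ), ∀ t : F', |g t - (2 * (t:ℝ) - 1) * h t| < ε :=
  stmt3_general F' hhalf
end

section
/- Every nonzero element of G_F^+ is an order unit for (G_0, G_F^+): for every x ∈ G_F^+ \ {0} and every y ∈ G_0 there exists k ∈ N with k·x − y ∈ G_F^+. -/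
open scoped BigOperators

noncomputable section

/-- The open interval `(0,1)` on which the functions of `G₀ = ℤ[t,t⁻¹,(1-t)⁻¹]` live. -/
def I01 : Set ℝ := Set.Ioo 0 1

/-- Membership in `G₀ = ℤ[t,t⁻¹,(1-t)⁻¹]`, viewed as continuous functions on `(0,1)`:
`f ∈ G₀` iff `f(t) = p(t)/(tᵐ(1-t)ⁿ)` for some integer polynomial `p`. -/
def memG0 (f : I01 → ℝ) : Prop :=
  ∃ (p : Polynomial ℤ) (m n : ℕ),
    ∀ t : I01, f t = (Polynomial.aeval (t : ℝ) p) / ((t : ℝ) ^ m * (1 - (t : ℝ)) ^ n)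

/-- The positive cone `G_F⁺ = {f ∈ G₀ : f > 0 on F} ∪ {0}`. -/
def memGFp (F : Set ℝ) (f : I01 → ℝ) : Prop :=
  memG0 f ∧ ((∀ t : I01, (t : ℝ) ∈ F → 0 < f t) ∨ f = 0)

/-- Membership in `G = ⊕_{n ∈ ℤ} G₀` (finitely supported sequences of elements of `G₀`). -/
def memG (x : ℤ → I01 → ℝ) : Prop :=
  (∀ n : ℤ, memG0 (x n)) ∧ {n : ℤ | x n ≠ 0}.Finite

/-- `Σ_{n ∈ ℤ} αⁿ(xₙ)(t)`, where `α` is multiplication by `t/(1-t)`. -/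
def sumAlpha (x : ℤ → I01 → ℝ) (t : I01) : ℝ :=
  ∑ᶠ n : ℤ, ((t : ℝ) / (1 - (t : ℝ))) ^ n * x n t

/-- `Σ_{n ∈ ℤ} xₙ(t)`. -/
def sumPlain (x : ℤ → I01 → ℝ) (t : I01) : ℝ := ∑ᶠ n : ℤ, x n t

/-- The automorphism `γ₊ : G → G`, `γ₊((xₙ)ₙ) = (α(x_{n+1}))ₙ`. -/
def gammaStar (x : ℤ → I01 → ℝ) : ℤ → I01 → ℝ :=
  fun n t => ((t : ℝ) / (1 - (t : ℝ))) * x (n + 1) t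

/-- The positive cone `G⁺` of `G` determined by `F` and `F₁`. -/
def memGplus (F F1 : Set ℝ) (x : ℤ → I01 → ℝ) : Prop :=
  memG x ∧
    (((∀ t : I01, (t : ℝ) ∈ F → 0 < sumAlpha x t) ∧
      (∀ t : I01, (t : ℝ) ∈ F1 → 0 < sumPlain x t)) ∨ x = 0)

/-- The cone `G⁺⁺ = {0} ∪ {x ∈ G : Σₙ αⁿ(xₙ) > 0 on F}`. -/
def memGpp (F : Set ℝ) (x : ℤ → I01 → ℝ) : Prop :=
  memG x ∧ ((∀ t : I01, (t : ℝ) ∈ F → 0 < sumAlpha x t) ∨ x = 0)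

/-- The sequence in `G` supported at `n = 0` with value `a`. -/
def delta0 (a : I01 → ℝ) : ℤ → I01 → ℝ := fun n => if n = 0 then a else 0

/-
An element `f ≠ 0` of `G_F⁺` is strictly positive on `F`, and `F` is a compact subset of `(0,1)`,
where every element of `G₀` is continuous. Hence `g / f` is bounded above on `F`, and any natural
number `k` beyond that bound makes `k • f - g` strictly positive on `F`; it lies in `G₀` because `G₀` is
closed under subtraction (clear denominators).
-/

open Polynomial

namespace memG0

variable {f g : I01 → ℝ}

theorem sub (hf : memG0 f) (hg : memG0 g) : memG0 (f - g) := by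
  obtain ⟨p, m, n, hp⟩ := hf
  obtain ⟨q, a, b, hq⟩ := hg
  refine ⟨p * (X ^ a * (1 - X) ^ b) - q * (X ^ m * (1 - X) ^ n), m + a, n + b, fun t => ?_⟩
  have ht : (t : ℝ) ≠ 0 := t.2.1.ne'
  have h1t : 1 - (t : ℝ) ≠ 0 := (sub_pos.mpr t.2.2).ne'
  simp only [Pi.sub_apply, hp, hq, map_sub, map_mul, map_pow, aeval_X, map_one]
  field_simp
  ring

theorem nsmul (hf : memG0 f) (k : ℕ) : memG0 (k • f) := by
  obtain ⟨p, m, n, hp⟩ := hf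
  refine ⟨k • p, m, n, fun t => ?_⟩
  rw [Pi.smul_apply, hp, map_nsmul, smul_div_assoc]

theorem continuous (hf : memG0 f) : Continuous f := by
  obtain ⟨p, m, n, hp⟩ := hf
  rw [funext hp]
  refine (p.continuous_aeval.comp continuous_subtype_val).div (by fun_prop) fun t => ?_
  exact mul_ne_zero (pow_ne_zero _ t.2.1.ne') (pow_ne_zero _ (sub_pos.mpr t.2.2).ne')

end memG0

theorem exists_nat_lt_mul_of_isCompact {X : Type*} [TopologicalSpace X] {K : Set X}
    (hK : IsCompact K) {f g : X → ℝ} (hf : ContinuousOn f K) (hg : ContinuousOn g K)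
    (hpos : ∀ x ∈ K, 0 < f x) : ∃ k : ℕ, ∀ x ∈ K, g x < k * f x := by
  obtain ⟨M, hM⟩ := hK.bddAbove_image (hg.div hf fun x hx => (hpos x hx).ne')
  obtain ⟨k, hk⟩ := exists_nat_gt M
  refine ⟨k, fun x hx => ?_⟩
  rw [← div_lt_iff₀ (hpos x hx)]
  exact (hM ⟨x, hx, rfl⟩).trans_lt hk

theorem isCompact_preimage_coe_I01 {F : Set ℝ} (hFc : IsClosed F) (hFsub : F ⊆ Set.Icc 0 1)
    (hF0 : (0:ℝ) ∉ F) (hF1 : (1:ℝ) ∉ F) : IsCompact ((↑) ⁻¹' F : Set I01) := by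
  have hFI : F ⊆ I01 := fun t ht =>
    ⟨(hFsub ht).1.lt_of_ne (ne_of_mem_of_not_mem ht hF0).symm,
      (hFsub ht).2.lt_of_ne (ne_of_mem_of_not_mem ht hF1)⟩
  rw [Subtype.isCompact_iff, Subtype.image_preimage_coe, Set.inter_eq_right.mpr hFI]
  exact isCompact_Icc.of_isClosed_subset hFc hFsub

theorem stmt6_general (F : Set ℝ) (hFc : IsClosed F)
    (hFsub : F ⊆ Set.Icc 0 1) (hF0 : (0:ℝ) ∉ F) (hF1 : (1:ℝ) ∉ F) :
    ∀ f : I01 → ℝ, memGFp F f → f ≠ 0 → ∀ g : I01 → ℝ, memG0 g →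
      ∃ k : ℕ, memGFp F (k • f - g) := by
  rintro f ⟨hf, hfpos | rfl⟩ hf0 g hg
  · obtain ⟨k, hk⟩ := exists_nat_lt_mul_of_isCompact (isCompact_preimage_coe_I01 hFc hFsub hF0 hF1)
      hf.continuous.continuousOn hg.continuous.continuousOn hfpos
    refine ⟨k, (hf.nsmul k).sub hg, Or.inl fun t ht => ?_⟩
    simpa [nsmul_eq_mul] using hk t ht
  · exact (hf0 rfl).elim

/-- every nonzero element of `G_F⁺` is an order unit for `(G₀, G_F⁺)`. -/
theorem stmt6 (F : Set ℝ) (hFne : F.Nonempty) (hFc : IsClosed F)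
    (hFsub : F ⊆ Set.Icc 0 1) (hF0 : (0:ℝ) ∉ F) (hF1 : (1:ℝ) ∉ F) :
    ∀ f : I01 → ℝ, memGFp F f → f ≠ 0 → ∀ g : I01 → ℝ, memG0 g →
      ∃ k : ℕ, memGFp F (k • f - g) :=
  stmt6_general F hFc hFsub hF0 hF1

end
end

section
/- Let G^+ ⊆ G be as defined. Then G^+ + G^+ ⊆ G^+, G^+ ∩ (−G^+) = {0}, and (G, G^+) is unperforated. -/
open scoped BigOperators

noncomputable section

/-! For each `t ∈ (0,1)` the sums `sumAlpha x t` and `sumPlain x t` are additive group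
homomorphisms in `x`, so positivity of them on `F` and `F₁` survives addition and is detected on
positive multiples, while `x` and `-x` cannot both have positive `sumAlpha` at a point of `F`. -/

lemma memG0_add {f g : I01 → ℝ} (hf : memG0 f) (hg : memG0 g) : memG0 (f + g) := by
  obtain ⟨p, m, n, hp⟩ := hf
  obtain ⟨q, m', n', hq⟩ := hg
  refine ⟨p * Polynomial.X ^ m' * (1 - Polynomial.X) ^ n'
      + q * Polynomial.X ^ m * (1 - Polynomial.X) ^ n, m + m', n + n', fun t => ?_⟩
  have ht0 : (t : ℝ) ≠ 0 := t.2.1.ne'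
  have ht1 : 1 - (t : ℝ) ≠ 0 := sub_ne_zero.2 t.2.2.ne'
  simp only [Pi.add_apply, hp t, hq t, map_add, map_mul, map_pow, map_sub, map_one,
    Polynomial.aeval_X]
  field_simp
  ring

lemma memG_add {x y : ℤ → I01 → ℝ} (hx : memG x) (hy : memG y) : memG (x + y) :=
  ⟨fun n => memG0_add (hx.1 n) (hy.1 n), (hx.2.union hy.2).subset (Function.support_add x y)⟩

section Sums

variable {x y : ℤ → I01 → ℝ}

lemma support_eval_subset (x : ℤ → I01 → ℝ) (t : I01) :
    (Function.support fun n => x n t) ⊆ {n | x n ≠ 0} :=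
  fun n hn hx => hn (by simp [hx])

lemma sumAlpha_add (hx : {n | x n ≠ 0}.Finite) (hy : {n | y n ≠ 0}.Finite) (t : I01) :
    sumAlpha (x + y) t = sumAlpha x t + sumAlpha y t := by
  simp only [sumAlpha, Pi.add_apply, mul_add]
  exact finsum_add_distrib
    (hx.subset ((Function.support_mul_subset_right _ _).trans (support_eval_subset x t)))
    (hy.subset ((Function.support_mul_subset_right _ _).trans (support_eval_subset y t)))

lemma sumPlain_add (hx : {n | x n ≠ 0}.Finite) (hy : {n | y n ≠ 0}.Finite) (t : I01) :
    sumPlain (x + y) t = sumPlain x t + sumPlain y t :=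
  finsum_add_distrib (hx.subset (support_eval_subset x t)) (hy.subset (support_eval_subset y t))

lemma sumAlpha_nsmul (x : ℤ → I01 → ℝ) (k : ℕ) (t : I01) :
    sumAlpha (k • x) t = k * sumAlpha x t := by
  rw [sumAlpha, sumAlpha, mul_finsum]
  congr with n
  simp only [Pi.smul_apply, nsmul_eq_mul]
  ring

lemma sumPlain_nsmul (x : ℤ → I01 → ℝ) (k : ℕ) (t : I01) :
    sumPlain (k • x) t = k * sumPlain x t := by
  simp only [sumPlain, mul_finsum, Pi.smul_apply, nsmul_eq_mul]

lemma sumAlpha_neg (x : ℤ → I01 → ℝ) (t : I01) : sumAlpha (-x) t = -sumAlpha x t := by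
  simp only [sumAlpha, Pi.neg_apply, mul_neg, finsum_neg_distrib]

end Sums

section Cone

variable {F F1 : Set ℝ} {x y : ℤ → I01 → ℝ}

lemma memGplus_add (hx : memGplus F F1 x) (hy : memGplus F F1 y) : memGplus F F1 (x + y) := by
  refine ⟨memG_add hx.1 hy.1, ?_⟩
  rcases hx with ⟨hxG, ⟨hxF, hxF1⟩ | rfl⟩
  · rcases hy with ⟨hyG, ⟨hyF, hyF1⟩ | rfl⟩
    · refine Or.inl ⟨fun t ht => ?_, fun t ht => ?_⟩
      · rw [sumAlpha_add hxG.2 hyG.2]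
        exact add_pos (hxF t ht) (hyF t ht)
      · rw [sumPlain_add hxG.2 hyG.2]
        exact add_pos (hxF1 t ht) (hyF1 t ht)
    · rw [add_zero]
      exact Or.inl ⟨hxF, hxF1⟩
  · rw [zero_add]
    exact hy.2

lemma eq_zero_of_memGplus_of_memGplus_neg (hF : ∃ t : I01, (t : ℝ) ∈ F)
    (hx : memGplus F F1 x) (hnx : memGplus F F1 (-x)) : x = 0 := by
  obtain ⟨t, ht⟩ := hF
  rcases hx.2 with ⟨hxF, -⟩ | hx0
  · rcases hnx.2 with ⟨hnxF, -⟩ | hnx0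
    · linarith [hxF t ht, hnxF t ht, sumAlpha_neg x t]
    · exact neg_eq_zero.mp hnx0
  · exact hx0

lemma memGplus_of_nsmul (hx : memG x) {k : ℕ} (hk : k ≠ 0) (h : memGplus F F1 (k • x)) :
    memGplus F F1 x := by
  have hk' : (0 : ℝ) ≤ k := k.cast_nonneg
  refine ⟨hx, ?_⟩
  rcases h.2 with ⟨hF, hF1⟩ | h0
  · refine Or.inl ⟨fun t ht => ?_, fun t ht => ?_⟩
    · exact pos_of_mul_pos_right (sumAlpha_nsmul x k t ▸ hF t ht) hk'
    · exact pos_of_mul_pos_right (sumPlain_nsmul x k t ▸ hF1 t ht) hk'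
  · exact Or.inr ((smul_eq_zero.mp h0).resolve_left hk)

end Cone

lemma exists_I01_mem {F : Set ℝ} (hFne : F.Nonempty) (hFsub : F ⊆ Set.Icc 0 1)
    (hF0 : (0 : ℝ) ∉ F) (hF1 : (1 : ℝ) ∉ F) : ∃ t : I01, (t : ℝ) ∈ F := by
  obtain ⟨s, hs⟩ := hFne
  obtain ⟨hs0, hs1⟩ := hFsub hs
  exact ⟨⟨s, hs0.lt_of_ne (by rintro rfl; exact hF0 hs),
    hs1.lt_of_ne (by rintro rfl; exact hF1 hs)⟩, hs⟩

theorem stmt7_general (F : Set ℝ) (hFne : F.Nonempty)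
    (hFsub : F ⊆ Set.Icc 0 1) (hF0 : (0:ℝ) ∉ F) (hF1 : (1:ℝ) ∉ F)
    (F1 : Set ℝ) :
    (∀ x y : ℤ → I01 → ℝ, memGplus F F1 x → memGplus F F1 y → memGplus F F1 (x + y)) ∧
    (∀ x : ℤ → I01 → ℝ, memGplus F F1 x → memGplus F F1 (-x) → x = 0) ∧
    (∀ x : ℤ → I01 → ℝ, memG x → ∀ n : ℕ, 1 ≤ n → memGplus F F1 (n • x) →
      memGplus F F1 x) :=
  ⟨fun _ _ => memGplus_add,
    fun _ => eq_zero_of_memGplus_of_memGplus_neg (exists_I01_mem hFne hFsub hF0 hF1),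
    fun _ hx _ hn => memGplus_of_nsmul hx (Nat.one_le_iff_ne_zero.mp hn)⟩

/-- `G⁺ + G⁺ ⊆ G⁺`, `G⁺ ∩ (−G⁺) = {0}`, and `(G, G⁺)` is unperforated. -/
theorem stmt7 (F : Set ℝ) (hFne : F.Nonempty) (hFc : IsClosed F)
    (hFsub : F ⊆ Set.Icc 0 1) (hF0 : (0:ℝ) ∉ F) (hF1 : (1:ℝ) ∉ F)
    (F1 : Set ℝ) (hF1c : IsClosed F1)
    (hF1sub : F1 ⊆ Set.Icc 0 1) (hF10 : (0:ℝ) ∉ F1) (hF11 : (1:ℝ) ∉ F1) :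
    (∀ x y : ℤ → I01 → ℝ, memGplus F F1 x → memGplus F F1 y → memGplus F F1 (x + y)) ∧
    (∀ x : ℤ → I01 → ℝ, memGplus F F1 x → memGplus F F1 (-x) → x = 0) ∧
    (∀ x : ℤ → I01 → ℝ, memG x → ∀ n : ℕ, 1 ≤ n → memGplus F F1 (n • x) →
      memGplus F F1 x) :=
  stmt7_general F hFne hFsub hF0 hF1 F1

end
end

section
/- Let γ_* : G → G be the automorphism γ_*((x_n)_n) = (α(x_{n+1}))_n. For x = (x_n)_n ∈ G, one has Σ_{n∈Z} α^n(x_n) = 0 in G_0 if and only if x lies in the image of (id_G − γ_*). -/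
open scoped BigOperators

noncomputable section

/-
With `c = t/(1-t)`, one has `cⁿ (y - γ₊ y)ₙ = cⁿ yₙ - cⁿ⁺¹ yₙ₊₁`, so the weighted sum of
`y - γ₊ y` telescopes to `0`. Conversely, if `Σₙ cⁿ xₙ = 0`, the tail sums `Tₙ = Σ_{k ≥ n} cᵏ xₖ`
vanish both above and below the support of `x`, and `yₙ = c⁻ⁿ Tₙ = Σ_{k ≥ n} cᵏ⁻ⁿ xₖ` is a
finitely supported sequence in `G₀` with `x = y - γ₊ y`.
-/

open Function

section TailSum

variable {A : Type*}

def tailSum [AddCommMonoid A] (w : ℤ → A) (n : ℤ) : A := ∑ᶠ k ∈ Set.Ici n, w k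

theorem tailSum_eq_sum_filter [AddCommMonoid A] {w : ℤ → A} {s : Finset ℤ}
    (hs : support w ⊆ s) (n : ℤ) : tailSum w n = ∑ k ∈ s with n ≤ k, w k := by
  refine finsum_mem_eq_sum_of_inter_support_eq _ (Set.ext fun k => ?_)
  simp only [Set.mem_inter_iff, Set.mem_Ici, Finset.coe_filter, Set.mem_ofPred_eq]
  exact ⟨fun ⟨hk, hw⟩ => ⟨⟨hs hw, hk⟩, hw⟩, fun ⟨⟨_, hk⟩, hw⟩ => ⟨hk, hw⟩⟩

theorem tailSum_sub_tailSum_add_one [AddCommGroup A] {w : ℤ → A} (hw : (support w).Finite)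
    (n : ℤ) : tailSum w n - tailSum w (n + 1) = w n := by
  have hIci : Set.Ici n = insert n (Set.Ici (n + 1)) := by
    ext k; simp only [Set.mem_Ici, Set.mem_insert_iff]; omega
  rw [tailSum, hIci, finsum_mem_insert' _ (by simp) (hw.subset Set.inter_subset_right),
    tailSum, add_sub_cancel_right]

theorem tailSum_eq_zero [AddCommMonoid A] {w : ℤ → A} {n : ℤ}
    (h : ∀ k ∈ support w, k < n) : tailSum w n = 0 :=
  finsum_mem_of_eqOn_zero fun k hk => of_not_not fun hwk => (h k hwk).not_ge hk

theorem tailSum_eq_finsum [AddCommMonoid A] {w : ℤ → A} {n : ℤ}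
    (h : ∀ k ∈ support w, n ≤ k) : tailSum w n = ∑ᶠ k, w k := by
  refine (finsum_mem_inter_support_eq' w _ _ fun k hk => ?_).trans (finsum_mem_univ w)
  simpa using h k hk

theorem support_tailSum_subset [AddCommMonoid A] {w : ℤ → A} {a b : ℤ}
    (hab : support w ⊆ Set.Icc a b) (hw : ∑ᶠ k, w k = 0) : support (tailSum w) ⊆ Set.Icc a b := by
  intro n hn
  by_contra hout
  rcases le_or_gt a n with ha | ha
  · refine hn (tailSum_eq_zero fun k hk => ?_)
    have := hab hk
    simp only [Set.mem_Icc] at this hout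
    omega
  · exact hn ((tailSum_eq_finsum fun k hk => (ha.trans_le (hab hk).1).le).trans hw)

theorem finsum_sub_add_one_eq_zero [AddCommGroup A] {z : ℤ → A} (hz : (support z).Finite) :
    ∑ᶠ n, (z n - z (n + 1)) = 0 := by
  have hshift : (support fun n => z (n + 1)).Finite :=
    hz.preimage (add_left_injective 1).injOn
  have hsum_shift : ∑ᶠ n, z (n + 1) = ∑ᶠ n, z n := finsum_comp_equiv (Equiv.addRight 1)
  rw [finsum_sub_distrib hz hshift, hsum_shift, sub_self]

end TailSum

def alphaFactor : I01 → ℝ := fun t => t / (1 - t)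

theorem alphaFactor_ne_zero (t : I01) : alphaFactor t ≠ 0 :=
  (div_pos t.2.1 (sub_pos.2 t.2.2)).ne'

def G0 : Subring (I01 → ℝ) where
  carrier := {f | memG0 f}
  zero_mem' := ⟨0, 0, 0, by simp⟩
  one_mem' := ⟨1, 0, 0, by simp⟩
  neg_mem' := by
    rintro f ⟨p, m, n, hp⟩
    exact ⟨-p, m, n, fun t => by simp [hp t, neg_div]⟩
  add_mem' := by
    rintro f g ⟨p, m, n, hp⟩ ⟨q, m', n', hq⟩
    refine ⟨p * Polynomial.X ^ m' * (1 - Polynomial.X) ^ n'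
      + q * Polynomial.X ^ m * (1 - Polynomial.X) ^ n, m + m', n + n', fun t => ?_⟩
    have ht : (t : ℝ) ≠ 0 := t.2.1.ne'
    have ht' : 1 - (t : ℝ) ≠ 0 := (sub_pos.2 t.2.2).ne'
    simp only [Pi.add_apply, hp t, hq t, map_add, map_mul, map_pow, map_sub, map_one,
      Polynomial.aeval_X]
    field_simp
    ring
  mul_mem' := by
    rintro f g ⟨p, m, n, hp⟩ ⟨q, m', n', hq⟩
    refine ⟨p * q, m + m', n + n', fun t => ?_⟩
    simp only [Pi.mul_apply, hp t, hq t, map_mul, div_mul_div_comm, pow_add]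
    ring

theorem alphaFactor_mem_G0 : alphaFactor ∈ G0 :=
  ⟨Polynomial.X, 0, 1, fun t => by simp [alphaFactor]⟩

def alphaPow (x : ℤ → I01 → ℝ) (t : I01) (n : ℤ) : ℝ := alphaFactor t ^ n * x n t

theorem support_alphaPow_subset (x : ℤ → I01 → ℝ) (t : I01) :
    support (alphaPow x t) ⊆ support x := fun n hn hx => hn (by simp [alphaPow, hx])

theorem alphaPow_sub_gammaStar (y : ℤ → I01 → ℝ) (t : I01) (n : ℤ) :
    alphaPow (y - gammaStar y) t n = alphaPow y t n - alphaPow y t (n + 1) := by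
  simp only [alphaPow, gammaStar, Pi.sub_apply, zpow_add_one₀ (alphaFactor_ne_zero t)]
  rw [alphaFactor]
  ring

theorem sumAlpha_sub_gammaStar {y : ℤ → I01 → ℝ} (hy : (support y).Finite) (t : I01) :
    sumAlpha (y - gammaStar y) t = 0 := by
  change ∑ᶠ n, alphaPow (y - gammaStar y) t n = 0
  simp_rw [alphaPow_sub_gammaStar]
  exact finsum_sub_add_one_eq_zero (hy.subset (support_alphaPow_subset y t))

def gammaPreimage (x : ℤ → I01 → ℝ) (n : ℤ) (t : I01) : ℝ :=
  alphaFactor t ^ (-n) * tailSum (alphaPow x t) n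

theorem gammaPreimage_eq_sum {x : ℤ → I01 → ℝ} {s : Finset ℤ} (hs : support x ⊆ s) (n : ℤ) :
    gammaPreimage x n = ∑ k ∈ s with n ≤ k, alphaFactor ^ (k - n).toNat * x k := by
  funext t
  have hc := alphaFactor_ne_zero t
  rw [gammaPreimage, tailSum_eq_sum_filter ((support_alphaPow_subset x t).trans hs),
    Finset.mul_sum, Finset.sum_apply]
  refine Finset.sum_congr rfl fun k hk => ?_
  have hnk : 0 ≤ k - n := sub_nonneg.2 (Finset.mem_filter.1 hk).2
  rw [alphaPow, ← mul_assoc, ← zpow_add₀ hc, Pi.mul_apply, Pi.pow_apply, ← zpow_natCast,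
    Int.toNat_of_nonneg hnk, neg_add_eq_sub]

theorem gammaPreimage_mem_G0 {x : ℤ → I01 → ℝ} (hx : memG x) (n : ℤ) :
    gammaPreimage x n ∈ G0 := by
  rw [gammaPreimage_eq_sum hx.2.coe_toFinset.ge]
  exact Subring.sum_mem _ fun k _ => Subring.mul_mem _ (Subring.pow_mem _ alphaFactor_mem_G0 _)
    (hx.1 k)

theorem support_gammaPreimage_finite {x : ℤ → I01 → ℝ} (hx : (support x).Finite)
    (hsum : ∀ t, sumAlpha x t = 0) : (support (gammaPreimage x)).Finite := by
  obtain ⟨a, ha⟩ := hx.bddBelow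
  obtain ⟨b, hb⟩ := hx.bddAbove
  refine (Set.finite_Icc a b).subset fun n hn => ?_
  obtain ⟨t, ht⟩ := Function.ne_iff.1 hn
  have hab : support (alphaPow x t) ⊆ Set.Icc a b :=
    (support_alphaPow_subset x t).trans fun k hk => ⟨ha hk, hb hk⟩
  exact support_tailSum_subset hab (hsum t) (right_ne_zero_of_mul ht)

theorem sub_gammaStar_gammaPreimage {x : ℤ → I01 → ℝ} (hx : (support x).Finite) :
    gammaPreimage x - gammaStar (gammaPreimage x) = x := by
  funext n t
  have hc := alphaFactor_ne_zero t
  have htail := tailSum_sub_tailSum_add_one (hx.subset (support_alphaPow_subset x t)) n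
  have hshift : alphaFactor t * alphaFactor t ^ (-(n + 1)) = alphaFactor t ^ (-n) := by
    rw [neg_add, zpow_add₀ hc, zpow_neg_one]
    field_simp
  change gammaPreimage x n t - alphaFactor t * gammaPreimage x (n + 1) t = x n t
  rw [gammaPreimage, gammaPreimage, ← mul_assoc, hshift, ← mul_sub, htail, alphaPow,
    ← mul_assoc, ← zpow_add₀ hc, neg_add_cancel, zpow_zero, one_mul]

/-- for `x ∈ G`, `Σₙ αⁿ(xₙ) = 0` iff `x ∈ (id - γ₊)(G)`. -/
theorem stmt9 (x : ℤ → I01 → ℝ) (hx : memG x) :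
    (∀ t : I01, sumAlpha x t = 0) ↔ ∃ y : ℤ → I01 → ℝ, memG y ∧ x = y - gammaStar y := by
  constructor
  · intro hsum
    exact ⟨gammaPreimage x, ⟨gammaPreimage_mem_G0 hx, support_gammaPreimage_finite hx.2 hsum⟩,
      (sub_gammaStar_gammaPreimage hx.2).symm⟩
  · rintro ⟨y, hy, rfl⟩
    exact sumAlpha_sub_gammaStar hy.2

end
end

section
/- Let B be a C*-algebra, γ an automorphism of B, and P : B ⋊_γ Z → B the canonical conditional expectation. If ω is a lower semicontinuous densely defined weight on B ⋊_γ Z invariant under the dual circle action γ̂, then ω ∘ P ≤ ω on positive elements; i.e. ω(P(a)) ≤ ω(a) for all a ≥ 0. -/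
open scoped ENNReal

open Filter MeasureTheory

/-!
The sublevel set `{x | ω x ≤ ω a}` is convex (subadditivity and positive homogeneity) and closed
(lower semicontinuity), and by invariance it contains the whole orbit `t ↦ γ̂_t a`. A closed convex
set contains the averages of the integrable functions taking values in it, and `P a` is the
average of the orbit over `[0, 2π]`.
-/

theorem convex_setOf_le_of_subadditive {E : Type*} [AddCommGroup E] [Module ℝ E]
    (ω : E → ℝ≥0∞) (hsub : ∀ x y : E, ω (x + y) ≤ ω x + ω y)
    (hhom : ∀ (r : NNReal) (x : E), ω ((r : ℝ) • x) = (r : ℝ≥0∞) * ω x) (c : ℝ≥0∞) :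
    Convex ℝ {x | ω x ≤ c} := by
  intro x hx y hy r s hr hs hrs
  lift r to NNReal using hr
  lift s to NNReal using hs
  have hrs' : (r : ℝ≥0∞) + s = 1 := by exact_mod_cast (by exact_mod_cast hrs : r + s = 1)
  calc ω ((r : ℝ) • x + (s : ℝ) • y)
      ≤ r * ω x + s * ω y := by rw [← hhom, ← hhom]; exact hsub _ _
    _ ≤ r * c + s * c := by gcongr <;> assumption
    _ = c := by rw [← add_mul, hrs', one_mul]

theorem isClosed_setOf_le_of_le_liminf {X : Type*} [TopologicalSpace X] [SequentialSpace X]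
    (ω : X → ℝ≥0∞)
    (hlsc : ∀ (s : ℕ → X) (x : X), Tendsto s atTop (nhds x) → ω x ≤ liminf (fun n => ω (s n)) atTop)
    (c : ℝ≥0∞) : IsClosed {x | ω x ≤ c} := by
  refine IsSeqClosed.isClosed fun s x hs hx => ?_
  exact (hlsc s x hx).trans (liminf_le_of_frequently_le' (Frequently.of_forall hs))

theorem stmt19_general {A : Type*} [NormedRing A] [NormedAlgebra ℝ A] [CompleteSpace A]
    (γhat : ℝ → A → A)
    (hcont : ∀ a : A, Continuous fun t => γhat t a)
    (ω : A → ℝ≥0∞)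
    (hsub : ∀ a b : A, ω (a + b) ≤ ω a + ω b)
    (hhom : ∀ (r : NNReal) (a : A), ω ((r : ℝ) • a) = (r : ℝ≥0∞) * ω a)
    (hinv : ∀ t (a : A), ω (γhat t a) = ω a)
    (hlsc : ∀ (s : ℕ → A) (c : A), Filter.Tendsto s Filter.atTop (nhds c) →
      ω c ≤ Filter.liminf (fun n => ω (s n)) Filter.atTop)
    (P : A → A)
    (hP : ∀ a : A, P a = (2 * Real.pi)⁻¹ • ∫ t in (0 : ℝ)..(2 * Real.pi), γhat t a)
    (a : A) :
    ω (P a) ≤ ω a := by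
  have hP_avg : P a = ⨍ t in (0 : ℝ)..(2 * Real.pi), γhat t a := by
    rw [hP, interval_average_eq, sub_zero]
  have hvol : volume (Set.uIoc 0 (2 * Real.pi)) = ENNReal.ofReal (2 * Real.pi) := by
    rw [Set.uIoc_of_le (by positivity), Real.volume_Ioc, sub_zero]
  rw [hP_avg]
  exact (convex_setOf_le_of_subadditive ω hsub hhom (ω a)).set_average_mem
    (isClosed_setOf_le_of_le_liminf ω hlsc (ω a))
    (by simp [hvol, Real.pi_pos]) (hvol ▸ ENNReal.ofReal_ne_top)
    (Eventually.of_forall fun t => (hinv t a).le)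
    ((hcont a).integrableOn_uIcc.mono_set Set.uIoc_subset_uIcc)

/-- if `γ̂` is a `2π`-periodic flow (of star-algebra automorphisms) on a
C*-algebra (modelling the dual action on a crossed product `B ⋊_γ ℤ`),
`P(a) = (2π)⁻¹ ∫₀^{2π} γ̂_t(a) dt` the associated conditional expectation, and `ω` a
`γ̂`-invariant lower semicontinuous (densely defined) weight, then `ω(P(a)) ≤ ω(a)` for all
`a ≥ 0`. -/
theorem stmt19 {A : Type*} [NormedRing A] [StarRing A] [CStarRing A]
    [PartialOrder A] [StarOrderedRing A] [NormedAlgebra ℝ A] [CompleteSpace A]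
    (γhat : ℝ → A → A)
    (hlin : ∀ t, IsLinearMap ℝ (γhat t))
    (hmul : ∀ t (a b : A), γhat t (a * b) = γhat t a * γhat t b)
    (hstar : ∀ t (a : A), γhat t (star a) = star (γhat t a))
    (hgrp : ∀ s t (a : A), γhat (s + t) a = γhat s (γhat t a))
    (hid : ∀ a : A, γhat 0 a = a)
    (hper : ∀ t (a : A), γhat (t + 2 * Real.pi) a = γhat t a)
    (hcont : ∀ a : A, Continuous fun t => γhat t a)
    (ω : A → ℝ≥0∞)
    (hsub : ∀ a b : A, ω (a + b) ≤ ω a + ω b)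
    (hhom : ∀ (r : NNReal) (a : A), ω ((r : ℝ) • a) = (r : ℝ≥0∞) * ω a)
    (hinv : ∀ t (a : A), ω (γhat t a) = ω a)
    (hlsc : ∀ (s : ℕ → A) (c : A), Filter.Tendsto s Filter.atTop (nhds c) →
      ω c ≤ Filter.liminf (fun n => ω (s n)) Filter.atTop)
    (P : A → A)
    (hP : ∀ a : A, P a = (2 * Real.pi)⁻¹ • ∫ t in (0 : ℝ)..(2 * Real.pi), γhat t a)
    (a : A) (ha : 0 ≤ a) :
    ω (P a) ≤ ω a :=
  stmt19_general γhat hcont ω hsub hhom hinv hlsc P hP a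
end
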